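/- There exists a conformant plan for the planning problem P_{T,φ} if and only if T ⊨ φ, where T is a finite transition system, φ an ∃*∀* HyperLTL formula with reachability body tracked by a DFA with sink accepting states, and P_{T,φ} the product planning encoding. -/
import Mathlib


open scoped Classical

/-- An action of a non-deterministic planning problem. -/
structure PAct (S : Type*) where
  pre : Set S
  eff : S → Set S

/-- Belief-state execution semantics of a plan: `none` means undefined. -/
noncomputable def exec {S : Type*} (T : Set S) : List (PAct S) → Option (Set S)
  | [] => some T
  | a :: σ => if T ⊆ a.pre then exec (⋃ s ∈ T, a.eff s) σ else none

/-- A plan is conformant if its execution from the initial state is defined and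
ends inside the goal set. -/
def Conformant {S : Type*} (s₀ : S) (G : Set S) (σ : List (PAct S)) : Prop :=
  ∃ R : Set S, exec {s₀} σ = some R ∧ R ⊆ G

/-- A path in a transition system with directions. -/
def IsPath {L D : Type*} (linit : L) (κ : L → D → L) (p : ℕ → L) : Prop :=
  p 0 = linit ∧ ∀ i, ∃ d : D, p (i + 1) = κ (p i) d

/-- The run of a deterministic automaton on an infinite word. -/
def run {Q A : Type*} (q₀ : Q) (δ : Q → A → Q) (u : ℕ → A) : ℕ → Q
  | 0 => q₀
  | n + 1 => δ (run q₀ δ u n) (u n)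

/-- The letter (over `AP × Fin nm`) obtained from a tuple of locations via the labeling. -/
def letterOf {L AP : Type*} (nm : ℕ) (ℓ : L → Set AP) (ls : Fin nm → L) :
    Set (AP × Fin nm) :=
  {x | x.1 ∈ ℓ (ls x.2)}

/-- The action of the product planning problem `P_{T,φ}` associated with an
`n`-tuple of directions: the first `n` locations are updated deterministically,
the last `m` locations non-deterministically over all directions, and the DFA
state is updated deterministically from the current letter. -/
def prodAct {L D AP Q : Type*} (n m : ℕ) (κ : L → D → L) (ℓ : L → Set AP)
    (δ : Q → Set (AP × Fin (n + m)) → Q) (dv : Fin n → D) :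
    PAct ((Fin (n + m) → L) × Q) where
  pre := Set.univ
  eff := fun st =>
    { st' | ∃ du : Fin m → D,
        st' = (fun i => κ (st.1 i) (Fin.append dv du i),
               δ st.2 (letterOf (n + m) ℓ st.1)) }

/-- `T ⊨ ∃π₁…∃πₙ.∀πₙ₊₁…∀πₙ₊ₘ. ψ`, where `Sat` is the semantics of the body `ψ`
on infinite words over `2^{AP × {π₁,…,πₙ₊ₘ}}`. -/
def ModelsEA {L D AP : Type*} (n m : ℕ) (linit : L) (κ : L → D → L) (ℓ : L → Set AP)
    (Sat : (ℕ → Set (AP × Fin (n + m))) → Prop) : Prop :=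
  ∃ pe : Fin n → ℕ → L, (∀ i, IsPath linit κ (pe i)) ∧
    ∀ pu : Fin m → ℕ → L, (∀ j, IsPath linit κ (pu j)) →
      Sat (fun i => letterOf (n + m) ℓ (fun v => Fin.append pe pu v i))


section Aux

variable {L D AP Q : Type*}

/-- The path from `linit` following the direction sequence `d`. -/
def pathFrom (linit : L) (κ : L → D → L) (d : ℕ → D) : ℕ → L
  | 0 => linit
  | j + 1 => κ (pathFrom linit κ d j) (d j)

lemma isPath_pathFrom (linit : L) (κ : L → D → L) (d : ℕ → D) :
    IsPath linit κ (pathFrom linit κ d) :=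
  ⟨rfl, fun i => ⟨d i, rfl⟩⟩

lemma IsPath.exists_pathFrom {linit : L} {κ : L → D → L} {p : ℕ → L}
    (h : IsPath linit κ p) : ∃ d : ℕ → D, ∀ j, p j = pathFrom linit κ d j := by
  choose d hd using h.2
  refine ⟨d, fun j => ?_⟩
  induction j with
  | zero => exact h.1
  | succ j ih => rw [hd j, ih]; rfl

/-- One step of the product planning problem, with explicit directions. -/
def stepState (n m : ℕ) (κ : L → D → L) (ℓ : L → Set AP)
    (δ : Q → Set (AP × Fin (n + m)) → Q) (dv : Fin n → D) (du : Fin m → D)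
    (st : (Fin (n + m) → L) × Q) : (Fin (n + m) → L) × Q :=
  (fun i => κ (st.1 i) (Fin.append dv du i), δ st.2 (letterOf (n + m) ℓ st.1))

/-- The belief-state transformer of a plan. -/
def applyPlan (n m : ℕ) (κ : L → D → L) (ℓ : L → Set AP)
    (δ : Q → Set (AP × Fin (n + m)) → Q) :
    List (Fin n → D) → Set ((Fin (n + m) → L) × Q) → Set ((Fin (n + m) → L) × Q)
  | [], B => B
  | dv :: p, B => applyPlan n m κ ℓ δ p (⋃ s ∈ B, (prodAct n m κ ℓ δ dv).eff s)

lemma exec_prodAct (n m : ℕ) (κ : L → D → L) (ℓ : L → Set AP)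
    (δ : Q → Set (AP × Fin (n + m)) → Q) :
    ∀ (plan : List (Fin n → D)) (B : Set ((Fin (n + m) → L) × Q)),
      exec B (plan.map (prodAct n m κ ℓ δ)) = some (applyPlan n m κ ℓ δ plan B)
  | [], B => rfl
  | dv :: p, B => by
    rw [List.map_cons]
    show exec B _ = _
    rw [exec, if_pos (show B ⊆ (prodAct n m κ ℓ δ dv).pre from fun x _ => Set.mem_univ x)]
    exact exec_prodAct n m κ ℓ δ p _

/-- Deterministic evolution along explicit direction sequences. -/
def evolN (n m : ℕ) (κ : L → D → L) (ℓ : L → Set AP)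
    (δ : Q → Set (AP × Fin (n + m)) → Q) :
    ℕ → (ℕ → Fin n → D) → (ℕ → Fin m → D) →
      (Fin (n + m) → L) × Q → (Fin (n + m) → L) × Q
  | 0, _, _, st => st
  | k + 1, dvf, du, st =>
    evolN n m κ ℓ δ k (fun t => dvf (t + 1)) (fun t => du (t + 1))
      (stepState n m κ ℓ δ (dvf 0) (du 0) st)

lemma mem_applyPlan [Nonempty D] (n m : ℕ) (κ : L → D → L) (ℓ : L → Set AP)
    (δ : Q → Set (AP × Fin (n + m)) → Q) (dv₀ : Fin n → D) :
    ∀ (plan : List (Fin n → D)) (B : Set ((Fin (n + m) → L) × Q)) (st),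
      st ∈ applyPlan n m κ ℓ δ plan B ↔
        ∃ du : ℕ → Fin m → D, ∃ s ∈ B,
          st = evolN n m κ ℓ δ plan.length (fun t => plan.getD t dv₀) du s
  | [], B, st => by
    constructor
    · intro h
      exact ⟨fun _ _ => Classical.arbitrary D, st, h, rfl⟩
    · rintro ⟨du, s, hs, rfl⟩
      exact hs
  | dv :: p, B, st => by
    show st ∈ applyPlan n m κ ℓ δ p _ ↔ _
    rw [mem_applyPlan n m κ ℓ δ dv₀ p]
    constructor
    · rintro ⟨du, s', hs', rfl⟩
      obtain ⟨s, hs, du0, rfl⟩ : ∃ s ∈ B, ∃ du0 : Fin m → D,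
          s' = stepState n m κ ℓ δ dv du0 s := by
        simp only [Set.mem_iUnion] at hs'
        obtain ⟨s, hs, hmem⟩ := hs'
        obtain ⟨du0, h0⟩ := hmem
        exact ⟨s, hs, du0, h0⟩
      refine ⟨fun t => Nat.casesOn t du0 du, s, hs, ?_⟩
      rfl
    · rintro ⟨du, s, hs, rfl⟩
      refine ⟨fun t => du (t + 1), stepState n m κ ℓ δ dv (du 0) s, ?_, rfl⟩
      simp only [Set.mem_iUnion]
      exact ⟨s, hs, du 0, rfl⟩

/-- The tuple of locations after `j` steps following the direction tuples `dir`. -/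
def plocF (nm : ℕ) (linit : L) (κ : L → D → L) (dir : ℕ → Fin nm → D) :
    ℕ → Fin nm → L
  | 0 => fun _ => linit
  | j + 1 => fun v => κ (plocF nm linit κ dir j v) (dir j v)

lemma plocF_apply (nm : ℕ) (linit : L) (κ : L → D → L) (dir : ℕ → Fin nm → D) :
    ∀ (j : ℕ) (v : Fin nm),
      plocF nm linit κ dir j v = pathFrom linit κ (fun t => dir t v) j
  | 0, v => rfl
  | j + 1, v => by
    show κ (plocF nm linit κ dir j v) (dir j v) = _
    rw [plocF_apply nm linit κ dir j v]; rfl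

lemma plocF_congr (nm : ℕ) (linit : L) (κ : L → D → L)
    {dir dir' : ℕ → Fin nm → D} :
    ∀ j : ℕ, (∀ t < j, dir t = dir' t) →
      plocF nm linit κ dir j = plocF nm linit κ dir' j
  | 0, _ => rfl
  | j + 1, h => by
    show (fun v => κ (plocF nm linit κ dir j v) (dir j v)) = _
    rw [plocF_congr nm linit κ j (fun t ht => h t (Nat.lt_succ_of_lt ht)),
      h j (Nat.lt_succ_self j)]
    rfl

lemma run_congr {A : Type*} (q₀ : Q) (δ : Q → A → Q) {u u' : ℕ → A} :
    ∀ k : ℕ, (∀ t < k, u t = u' t) → run q₀ δ u k = run q₀ δ u' k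
  | 0, _ => rfl
  | k + 1, h => by
    show δ (run q₀ δ u k) (u k) = δ (run q₀ δ u' k) (u' k)
    rw [run_congr q₀ δ k (fun t ht => h t (Nat.lt_succ_of_lt ht)),
      h k (Nat.lt_succ_self k)]

/-- The bridge between the planning evolution and runs of the automaton. -/
lemma evolN_eq (n m : ℕ) (κ : L → D → L) (ℓ : L → Set AP)
    (δ : Q → Set (AP × Fin (n + m)) → Q) (linit : L) (q₀ : Q)
    (dir : ℕ → Fin (n + m) → D) :
    ∀ (k j : ℕ) (dvf : ℕ → Fin n → D) (du : ℕ → Fin m → D),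
      (∀ t, Fin.append (dvf t) (du t) = dir (j + t)) →
      evolN n m κ ℓ δ k dvf du (plocF (n + m) linit κ dir j,
        run q₀ δ (fun t => letterOf (n + m) ℓ (plocF (n + m) linit κ dir t)) j)
      = (plocF (n + m) linit κ dir (j + k),
        run q₀ δ (fun t => letterOf (n + m) ℓ (plocF (n + m) linit κ dir t)) (j + k))
  | 0, j, dvf, du, h => by simp [evolN]
  | k + 1, j, dvf, du, h => by
    show evolN n m κ ℓ δ k _ _ (stepState n m κ ℓ δ (dvf 0) (du 0) _) = _
    have hstep : stepState n m κ ℓ δ (dvf 0) (du 0)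
        (plocF (n + m) linit κ dir j,
          run q₀ δ (fun t => letterOf (n + m) ℓ (plocF (n + m) linit κ dir t)) j)
        = (plocF (n + m) linit κ dir (j + 1),
          run q₀ δ (fun t => letterOf (n + m) ℓ (plocF (n + m) linit κ dir t)) (j + 1)) := by
      have h0 := h 0
      unfold stepState
      refine Prod.ext ?_ rfl
      show (fun v => κ (plocF (n + m) linit κ dir j v) (Fin.append (dvf 0) (du 0) v)) = _
      rw [h0]
      rfl
    rw [hstep, evolN_eq n m κ ℓ δ linit q₀ dir k (j + 1)
      (fun t => dvf (t + 1)) (fun t => du (t + 1))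
      (fun t => by rw [show j + 1 + t = j + (t + 1) by omega]; exact h (t + 1))]
    rw [show j + 1 + k = j + (k + 1) by omega]

lemma plocF_append (n m : ℕ) (linit : L) (κ : L → D → L)
    (dvf : ℕ → Fin n → D) (du : ℕ → Fin m → D)
    (pe : Fin n → ℕ → L) (pu : Fin m → ℕ → L)
    (hpe : ∀ i j, pe i j = pathFrom linit κ (fun t => dvf t i) j)
    (hpu : ∀ i j, pu i j = pathFrom linit κ (fun t => du t i) j) (j : ℕ) :
    plocF (n + m) linit κ (fun t => Fin.append (dvf t) (du t)) j
      = fun v => Fin.append pe pu v j := by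
  funext v
  rw [plocF_apply]
  induction v using Fin.addCases with
  | left i =>
    rw [Fin.append_left, hpe]
    congr 1
    funext t
    rw [Fin.append_left]
  | right i =>
    rw [Fin.append_right, hpu]
    congr 1
    funext t
    rw [Fin.append_right]

/-- The word read by the product run, from explicit direction sequences. -/
def wordOf (n m : ℕ) (linit : L) (κ : L → D → L) (ℓ : L → Set AP)
    (dvf : ℕ → Fin n → D) (du : ℕ → Fin m → D) : ℕ → Set (AP × Fin (n + m)) :=
  fun t => letterOf (n + m) ℓ
    (plocF (n + m) linit κ (fun t' => Fin.append (dvf t') (du t')) t)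

lemma evolN_init (n m : ℕ) (κ : L → D → L) (ℓ : L → Set AP)
    (δ : Q → Set (AP × Fin (n + m)) → Q) (linit : L) (q₀ : Q)
    (dvf : ℕ → Fin n → D) (du : ℕ → Fin m → D) (k : ℕ) :
    evolN n m κ ℓ δ k dvf du ((fun _ => linit, q₀) : (Fin (n + m) → L) × Q)
      = (plocF (n + m) linit κ (fun t => Fin.append (dvf t) (du t)) k,
        run q₀ δ (wordOf n m linit κ ℓ dvf du) k) := by
  have h := evolN_eq n m κ ℓ δ linit q₀ (fun t => Fin.append (dvf t) (du t)) k 0 dvf du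
    (fun t => by rw [Nat.zero_add])
  rw [Nat.zero_add] at h
  exact h

lemma run_wordOf_congr (n m : ℕ) (κ : L → D → L) (ℓ : L → Set AP)
    (δ : Q → Set (AP × Fin (n + m)) → Q) (linit : L) (q₀ : Q)
    {dvf dvf' : ℕ → Fin n → D} {du du' : ℕ → Fin m → D} (k : ℕ)
    (h1 : ∀ t < k, dvf t = dvf' t) (h2 : ∀ t < k, du t = du' t) :
    run q₀ δ (wordOf n m linit κ ℓ dvf du) k
      = run q₀ δ (wordOf n m linit κ ℓ dvf' du') k := by
  refine run_congr q₀ δ k (fun t ht => ?_)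
  unfold wordOf
  rw [plocF_congr (n + m) linit κ t
    (fun s hs => by rw [h1 s (hs.trans ht), h2 s (hs.trans ht)])]

lemma wordOf_eq_letters (n m : ℕ) (linit : L) (κ : L → D → L) (ℓ : L → Set AP)
    (dvf : ℕ → Fin n → D) (du : ℕ → Fin m → D)
    (pe : Fin n → ℕ → L) (pu : Fin m → ℕ → L)
    (hpe : ∀ i j, pe i j = pathFrom linit κ (fun t => dvf t i) j)
    (hpu : ∀ i j, pu i j = pathFrom linit κ (fun t => du t i) j) :
    (fun i => letterOf (n + m) ℓ (fun v => Fin.append pe pu v i))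
      = wordOf n m linit κ ℓ dvf du := by
  funext i
  unfold wordOf
  rw [plocF_append n m linit κ dvf du pe pu hpe hpu i]

end Aux

/-- Soundness and completeness of the product planning encoding: the conformant
planning problem `P_{T,φ}` admits a conformant plan iff `T ⊨ φ`. -/
theorem stmt8 {L D AP Q : Type*} [Fintype L] [Fintype D] [Fintype Q] [Nonempty D]
    (n m : ℕ) (linit : L) (κ : L → D → L) (ℓ : L → Set AP)
    (q₀ : Q) (δ : Q → Set (AP × Fin (n + m)) → Q) (F : Set Q)
    (hSink : ∀ q ∈ F, ∀ σ : Set (AP × Fin (n + m)), δ q σ ∈ F)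
    (Sat : (ℕ → Set (AP × Fin (n + m))) → Prop)
    (hAcc : ∀ u : ℕ → Set (AP × Fin (n + m)), (∃ i, run q₀ δ u i ∈ F) ↔ Sat u) :
    (∃ plan : List (Fin n → D),
        Conformant ((fun _ => linit, q₀) : (Fin (n + m) → L) × Q)
          {st | st.2 ∈ F} (plan.map (prodAct n m κ ℓ δ))) ↔
      ModelsEA n m linit κ ℓ Sat := by
  constructor
  · rintro ⟨plan, R, hexec, hR⟩
    rw [exec_prodAct] at hexec
    have hRR : R = applyPlan n m κ ℓ δ plan {(fun _ => linit, q₀)} :=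
      (Option.some.inj hexec).symm
    subst hRR
    have dv₀ : Fin n → D := fun _ => Classical.arbitrary D
    refine ⟨fun i => pathFrom linit κ (fun t => plan.getD t dv₀ i),
      fun i => isPath_pathFrom _ _ _, ?_⟩
    intro pu hpu
    choose dpu hdpu using fun j => (hpu j).exists_pathFrom
    have hmem : (plocF (n + m) linit κ
          (fun t => Fin.append (plan.getD t dv₀) (fun j => dpu j t)) plan.length,
        run q₀ δ (wordOf n m linit κ ℓ (fun t => plan.getD t dv₀)
          (fun t j => dpu j t)) plan.length)
        ∈ applyPlan n m κ ℓ δ plan {(fun _ => linit, q₀)} := by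
      rw [mem_applyPlan n m κ ℓ δ dv₀]
      exact ⟨fun t j => dpu j t, _, Set.mem_singleton _,
        (evolN_init n m κ ℓ δ linit q₀ _ _ plan.length).symm⟩
    have hF : run q₀ δ (wordOf n m linit κ ℓ (fun t => plan.getD t dv₀)
        (fun t j => dpu j t)) plan.length ∈ F := hR hmem
    have hSat := (hAcc _).mp ⟨plan.length, hF⟩
    rw [wordOf_eq_letters n m linit κ ℓ (fun t => plan.getD t dv₀)
      (fun t j => dpu j t) _ pu (fun i j => rfl) (fun i j => hdpu i j)]
    exact hSat
  · rintro ⟨pe, hpe, hSatAll⟩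
    choose dpe hdpe using fun i => (hpe i).exists_pathFrom
    have key : ∃ k, ∀ du : ℕ → Fin m → D,
        run q₀ δ (wordOf n m linit κ ℓ (fun t i => dpe i t) du) k ∈ F := by
      by_contra hcon
      push_neg at hcon
      letI : TopologicalSpace (Fin m → D) := ⊥
      haveI : DiscreteTopology (Fin m → D) := ⟨rfl⟩
      have hcl : ∀ k, IsClosed {du : ℕ → Fin m → D |
          run q₀ δ (wordOf n m linit κ ℓ (fun t i => dpe i t) du) k ∉ F} := by
        intro k
        have hCeq : {du : ℕ → Fin m → D |
            run q₀ δ (wordOf n m linit κ ℓ (fun t i => dpe i t) du) k ∉ F}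
            = (fun du : ℕ → Fin m → D => (fun t : Fin k => du t)) ⁻¹'
              {v : Fin k → Fin m → D |
                run q₀ δ (wordOf n m linit κ ℓ (fun t i => dpe i t)
                  (fun t => if h : t < k then v ⟨t, h⟩
                    else fun _ => Classical.arbitrary D)) k ∉ F} := by
          ext du
          simp only [Set.mem_setOf_eq, Set.mem_preimage]
          rw [run_wordOf_congr n m κ ℓ δ linit q₀ (dvf := fun t i => dpe i t)
            (dvf' := fun t i => dpe i t) (du := du)
            (du' := fun t => if h : t < k then (fun t : Fin k => du ↑t) ⟨t, h⟩
              else fun _ => Classical.arbitrary D)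
            k (fun t _ => rfl) (fun t ht => by
              show du t = if h : t < k then (fun t : Fin k => du ↑t) ⟨t, h⟩
                else fun _ => Classical.arbitrary D
              rw [dif_pos ht])]
        rw [hCeq]
        exact (isClosed_discrete _).preimage
          (continuous_pi fun t => continuous_apply _)
      obtain ⟨du, hdu⟩ :=
        IsCompact.nonempty_iInter_of_sequence_nonempty_isCompact_isClosed
          (fun k => {du : ℕ → Fin m → D |
            run q₀ δ (wordOf n m linit κ ℓ (fun t i => dpe i t) du) k ∉ F})
          (fun k du hdu hmem => hdu (hSink _ hmem _))
          (fun k => hcon k)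
          ((hcl 0).isCompact)
          hcl
      simp only [Set.mem_iInter, Set.mem_setOf_eq] at hdu
      have hS := hSatAll (fun j => pathFrom linit κ (fun t => du t j))
        (fun j => isPath_pathFrom _ _ _)
      rw [wordOf_eq_letters n m linit κ ℓ (fun t i => dpe i t) du pe _
        (fun i j => hdpe i j) (fun i j => rfl)] at hS
      obtain ⟨i, hi⟩ := (hAcc _).mpr hS
      exact hdu i hi
    obtain ⟨k, hk⟩ := key
    refine ⟨(List.range k).map (fun t i => dpe i t),
      applyPlan n m κ ℓ δ _ {(fun _ => linit, q₀)}, exec_prodAct _ _ _ _ _ _ _, ?_⟩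
    intro st hst
    rw [mem_applyPlan n m κ ℓ δ (fun _ => Classical.arbitrary D)] at hst
    obtain ⟨du, s, hs, rfl⟩ := hst
    rw [Set.mem_singleton_iff] at hs
    subst hs
    rw [evolN_init]
    show run q₀ δ (wordOf n m linit κ ℓ _ du) _ ∈ F
    have hlen : ((List.range k).map (fun (t : ℕ) (i : Fin n) => dpe i t)).length = k := by
      simp
    rw [hlen]
    have hgd : ∀ t < k, ((List.range k).map (fun (t : ℕ) (i : Fin n) => dpe i t)).getD t
        (fun _ => Classical.arbitrary D) = fun i => dpe i t := by
      intro t ht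
      rw [List.getD_eq_getElem _ _ (by simpa using ht)]
      simp
    rw [run_wordOf_congr n m κ ℓ δ linit q₀ k (fun t ht => hgd t ht) (fun t _ => rfl)]
    exact hk du
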